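/- Let J be a d×d real positive definite matrix. The map sending a positive definite matrix H with appropriate normalization to √J · R/(Tr R) · √J, where R = √(√(J^{-1}) H √(J^{-1})), is injective on the set of d×d real positive definite matrices H with Tr H = 1. -/

import Mathlib

open Matrix

open scoped Classical in
noncomputable def msqrt {d : ℕ} (A : Matrix (Fin d) (Fin d) ℝ) : Matrix (Fin d) (Fin d) ℝ :=
  if h : A.PosSemidef then
    (h.1.eigenvectorUnitary : Matrix (Fin d) (Fin d) ℝ) *
      diagonal (Real.sqrt ∘ h.1.eigenvalues) *
      (star h.1.eigenvectorUnitary : Matrix (Fin d) (Fin d) ℝ)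
  else 0

/-!
Write `Q = √J` and `K = √(J⁻¹)`, both invertible, and `Sᵢ = √(K Hᵢ K)`. Cancelling `Q` on both
sides gives `Sᵢ / Tr Sᵢ` equal; squaring gives `cᵢ K Hᵢ K` equal with `cᵢ = (Tr Sᵢ)⁻²`, and
cancelling `K` gives `c₁ H₁ = c₂ H₂`. Taking traces, `Tr Hᵢ = 1` forces `c₁ = c₂ ≠ 0`.
-/

open scoped MatrixOrder

lemma msqrt_eq_cfcSqrt {d : ℕ} (A : Matrix (Fin d) (Fin d) ℝ) : msqrt A = CFC.sqrt A := by
  by_cases hA : A.PosSemidef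
  · rw [msqrt, dif_pos hA, CFC.sqrt_eq_real_sqrt A hA.nonneg, cfcₙ_eq_cfc (hf0 := Real.sqrt_zero),
      hA.1.cfc_eq, IsHermitian.cfc, Unitary.conjStarAlgAut_apply]
    rfl
  · rw [msqrt, dif_neg hA, CFC.sqrt, cfcₙ_apply_of_not_predicate A (mt LE.le.posSemidef hA)]

lemma IsUnit.eq_of_mul_mul_eq_mul_mul {M : Type*} [Monoid M] {u a b : M} (hu : IsUnit u)
    (h : u * a * u = u * b * u) : a = b :=
  hu.mul_left_cancel (hu.mul_right_cancel h)

lemma Matrix.eq_of_smul_eq_smul_of_trace_eq_one {n K : Type*} [Fintype n] [Field K]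
    {A B : Matrix n n K} {a b : K} (ha : a ≠ 0) (h : a • A = b • B)
    (hA : A.trace = 1) (hB : B.trace = 1) : A = B := by
  have hab : a = b := by simpa [hA, hB] using congr(Matrix.trace $h)
  exact smul_right_injective _ ha (hab ▸ h)

lemma Matrix.trace_sqrt_ne_zero {n 𝕜 : Type*} [Fintype n] [DecidableEq n] [RCLike 𝕜]
    {A : Matrix n n 𝕜} (hA : 0 ≤ A) (h : A ≠ 0) : (CFC.sqrt A).trace ≠ 0 := by
  rwa [ne_eq, (CFC.sqrt_nonneg A).posSemidef.trace_eq_zero_iff, CFC.sqrt_eq_zero_iff A]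

/-- For `J` a `d×d` real positive definite matrix, the map
`H ↦ √J (R / Tr R) √J`, where `R = √(√(J⁻¹) H √(J⁻¹))`, is injective on the set of
`d×d` real positive definite matrices `H` with `Tr H = 1`. -/
theorem stmt7 {d : ℕ} (J : Matrix (Fin d) (Fin d) ℝ) (hJ : J.PosDef)
    (H₁ H₂ : Matrix (Fin d) (Fin d) ℝ) (hH₁ : H₁.PosDef) (hH₂ : H₂.PosDef)
    (htr₁ : H₁.trace = 1) (htr₂ : H₂.trace = 1)
    (heq : ((msqrt (msqrt J⁻¹ * H₁ * msqrt J⁻¹)).trace)⁻¹ •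
        (msqrt J * msqrt (msqrt J⁻¹ * H₁ * msqrt J⁻¹) * msqrt J) =
      ((msqrt (msqrt J⁻¹ * H₂ * msqrt J⁻¹)).trace)⁻¹ •
        (msqrt J * msqrt (msqrt J⁻¹ * H₂ * msqrt J⁻¹) * msqrt J)) :
    H₁ = H₂ := by
  simp only [msqrt_eq_cfcSqrt] at heq
  set K := CFC.sqrt J⁻¹
  have hQ : IsUnit (CFC.sqrt J) := (CFC.isUnit_sqrt_iff J hJ.posSemidef.nonneg).2 hJ.isUnit
  have hK : IsUnit K := (CFC.isUnit_sqrt_iff _ hJ.inv.posSemidef.nonneg).2 hJ.inv.isUnit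
  have hM_nonneg {H : Matrix (Fin d) (Fin d) ℝ} (hH : H.PosSemidef) : 0 ≤ K * H * K := by
    have hK_star : star K = K := (CFC.sqrt_nonneg J⁻¹).isSelfAdjoint.star_eq
    simpa only [hK_star] using star_left_conjugate_nonneg hH.nonneg K
  have hM_ne_zero {H : Matrix (Fin d) (Fin d) ℝ} (htr : H.trace = 1) : K * H * K ≠ 0 := by
    intro h
    have : H = 0 := hK.eq_of_mul_mul_eq_mul_mul (by simpa using h)
    simp [this] at htr
  set S₁ := CFC.sqrt (K * H₁ * K)
  set S₂ := CFC.sqrt (K * H₂ * K)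
  have hS : (S₁.trace)⁻¹ • S₁ = (S₂.trace)⁻¹ • S₂ :=
    hQ.eq_of_mul_mul_eq_mul_mul (by simpa only [Matrix.mul_smul, Matrix.smul_mul] using heq)
  have hM : (S₁.trace)⁻¹ ^ 2 • (K * H₁ * K) = (S₂.trace)⁻¹ ^ 2 • (K * H₂ * K) := by
    rw [← CFC.sqrt_mul_sqrt_self _ (hM_nonneg hH₁.posSemidef),
      ← CFC.sqrt_mul_sqrt_self _ (hM_nonneg hH₂.posSemidef)]
    simpa only [smul_mul_smul_comm, sq] using congr($hS * $hS)
  have hH : (S₁.trace)⁻¹ ^ 2 • H₁ = (S₂.trace)⁻¹ ^ 2 • H₂ :=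
    hK.eq_of_mul_mul_eq_mul_mul (by simpa only [Matrix.mul_smul, Matrix.smul_mul] using hM)
  have hS₁_trace : S₁.trace ≠ 0 :=
    trace_sqrt_ne_zero (hM_nonneg hH₁.posSemidef) (hM_ne_zero htr₁)
  exact eq_of_smul_eq_smul_of_trace_eq_one (pow_ne_zero _ (inv_ne_zero hS₁_trace)) hH htr₁ htr₂
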